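/- arXiv:1307.0014 — 6 statements merged into one kernel-verified Lean document; each statement's English description precedes it below -/
import Mathlib

section
/- For any density matrices σ₀, σ₁ on ℂ² and any binary POVM (Q₀, Q₁), there exist a binary projective measurement (P₀, P₁) and real numbers a, b ∈ [0,1] such that for each x ∈ {0,1}: Re(trace(Q₀ * σ_x)) = a·Re(trace(P₀ * σ_x)) + b·Re(trace(P₁ * σ_x)). Equivalently, the transition probability matrix of the POVM channel factors as T' = T''·T where T is the transition matrix of the projective-measurement channel and T'' = [[a, b],[1-a, 1-b]] is a column-stochastic matrix; i.e., the binary channel obtained from any POVM is stochastically degraded with respect to a binary channel obtained from a pair of orthogonal projections with the same output states. (Proposition 1) -/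
open Matrix
open scoped ComplexOrder

/-- A binary projective measurement on ℂ²: a pair of Hermitian idempotent matrices
summing to the identity. -/
def IsProjMeas (P₀ P₁ : Matrix (Fin 2) (Fin 2) ℂ) : Prop :=
  P₀.IsHermitian ∧ P₁.IsHermitian ∧ P₀ * P₀ = P₀ ∧ P₁ * P₁ = P₁ ∧ P₀ + P₁ = 1

/-- **Proposition 1.** The binary channel obtained from any POVM is stochastically
degraded with respect to a binary channel obtained from a pair of orthogonal
projections with the same output states. -/
theorem povm_channel_stochastically_degraded
    (σ₀ σ₁ Q₀ Q₁ : Matrix (Fin 2) (Fin 2) ℂ)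
    (hσ₀ : σ₀.PosSemidef) (hσ₀t : σ₀.trace = 1)
    (hσ₁ : σ₁.PosSemidef) (hσ₁t : σ₁.trace = 1)
    (hQ₀ : Q₀.PosSemidef) (hQ₁ : Q₁.PosSemidef) (hQ : Q₀ + Q₁ = 1) :
    ∃ (P₀ P₁ : Matrix (Fin 2) (Fin 2) ℂ) (a b : ℝ),
      IsProjMeas P₀ P₁ ∧ a ∈ Set.Icc (0:ℝ) 1 ∧ b ∈ Set.Icc (0:ℝ) 1 ∧
      (Q₀ * σ₀).trace.re = a * (P₀ * σ₀).trace.re + b * (P₁ * σ₀).trace.re ∧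
      (Q₀ * σ₁).trace.re = a * (P₀ * σ₁).trace.re + b * (P₁ * σ₁).trace.re := by
  classical
  have hH := hQ₀.1
  set U : Matrix (Fin 2) (Fin 2) ℂ := (hH.eigenvectorUnitary : Matrix (Fin 2) (Fin 2) ℂ) with hU
  have hUU : U * star U = 1 := Matrix.mem_unitaryGroup_iff.mp hH.eigenvectorUnitary.2
  have hUU' : star U * U = 1 := Matrix.mem_unitaryGroup_iff'.mp hH.eigenvectorUnitary.2
  set D : Fin 2 → Matrix (Fin 2) (Fin 2) ℂ :=
    fun i => diagonal (fun j => if j = i then (1:ℂ) else 0) with hD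
  set P : Fin 2 → Matrix (Fin 2) (Fin 2) ℂ := fun i => U * D i * star U with hP
  set a := hH.eigenvalues 0 with ha
  set b := hH.eigenvalues 1 with hb
  have hfstar : ∀ (i : Fin 2), (star fun j => if j = i then (1:ℂ) else 0)
      = fun j => if j = i then (1:ℂ) else 0 := by
    intro i; funext j; simp only [Pi.star_apply]; split <;> simp
  have hfmul : ∀ (i : Fin 2), (fun j => (if j = i then (1:ℂ) else 0) * if j = i then 1 else 0)
      = fun j => if j = i then (1:ℂ) else 0 := by
    intro i; funext j; split <;> simp
  have hDherm : ∀ i, (D i).conjTranspose = D i := by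
    intro i
    simp only [hD, diagonal_conjTranspose, hfstar i]
  have hDidem : ∀ i, D i * D i = D i := by
    intro i
    simp only [hD, diagonal_mul_diagonal, hfmul i]
  have hDsum : D 0 + D 1 = 1 := by
    ext j k
    fin_cases j <;> fin_cases k <;>
      simp [hD, diagonal_apply, Matrix.one_apply]
  have hPherm : ∀ i, (P i).IsHermitian := by
    intro i
    show (P i).conjTranspose = P i
    simp [hP, conjTranspose_mul, hDherm i, star_eq_conjTranspose, mul_assoc]
  have hPidem : ∀ i, P i * P i = P i := by
    intro i
    simp only [hP, mul_assoc]
    rw [← mul_assoc (star U) U, hUU', one_mul, ← mul_assoc (D i) (D i), hDidem]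
  have hPsum : P 0 + P 1 = 1 := by
    simp only [hP]
    rw [← add_mul, ← mul_add, hDsum, mul_one, hUU]
  have hdecomp : Q₀ = (a:ℂ) • P 0 + (b:ℂ) • P 1 := by
    have hspec := hH.spectral_theorem
    have hdiag : diagonal ((RCLike.ofReal : ℝ → ℂ) ∘ hH.eigenvalues)
        = (a:ℂ) • D 0 + (b:ℂ) • D 1 := by
      ext j k
      fin_cases j <;> fin_cases k <;> simp [hD, diagonal_apply, ha, hb]
    rw [hspec, hdiag]
    simp only [hP]
    rw [Unitary.conjStarAlgAut_apply, ← hU]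
    rw [Matrix.mul_add, Matrix.add_mul, Matrix.mul_smul, Matrix.mul_smul,
      Matrix.smul_mul, Matrix.smul_mul]
  have hbound : ∀ i, hH.eigenvalues i ∈ Set.Icc (0:ℝ) 1 := by
    intro i
    refine ⟨hQ₀.eigenvalues_nonneg i, ?_⟩
    set v : Fin 2 → ℂ := ⇑(hH.eigenvectorBasis i) with hv
    have hvQ : Q₀ *ᵥ v = (hH.eigenvalues i : ℂ) • v := by
      simpa [hv] using hH.mulVec_eigenvectorBasis i
    have hvnorm : star v ⬝ᵥ v = 1 := by
      have h1 := hH.eigenvectorBasis.orthonormal.1 i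
      have h2 : (inner ℂ (hH.eigenvectorBasis i) (hH.eigenvectorBasis i) : ℂ) = 1 := by
        rw [inner_self_eq_norm_sq_to_K, h1]; simp
      rw [EuclideanSpace.inner_eq_star_dotProduct] at h2
      simpa [hv, dotProduct, mul_comm] using h2
    have hQ1v : (0:ℂ) ≤ star v ⬝ᵥ (Q₁ *ᵥ v) := hQ₁.dotProduct_mulVec_nonneg v
    have hQ1eq : star v ⬝ᵥ (Q₁ *ᵥ v) = 1 - (hH.eigenvalues i : ℂ) := by
      have hq1 : Q₁ = 1 - Q₀ := by rw [← hQ]; abel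
      rw [hq1, Matrix.sub_mulVec, Matrix.one_mulVec, hvQ, dotProduct_sub,
        dotProduct_smul, hvnorm]
      simp
    rw [hQ1eq] at hQ1v
    have hre : (0:ℝ) ≤ 1 - hH.eigenvalues i := by
      simpa using (Complex.le_def.mp hQ1v).1
    linarith
  refine ⟨P 0, P 1, a, b, ⟨hPherm 0, hPherm 1, hPidem 0, hPidem 1, hPsum⟩,
    hbound 0, hbound 1, ?_, ?_⟩ <;>
  · rw [hdecomp]
    rw [Matrix.add_mul, Matrix.smul_mul, Matrix.smul_mul, trace_add, trace_smul,
      trace_smul]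
    simp [Complex.add_re, Complex.mul_re, Complex.ofReal_re, Complex.ofReal_im, smul_eq_mul]
end

section
/- For any density matrices σ₀, σ₁ on ℂ², any prior probabilities p₀, p₁ ≥ 0 with p₀ + p₁ = 1, and any binary POVM (Q₀, Q₁), there exists a binary projective measurement (P₀, P₁) such that the probability of correct decision satisfies p₀·Re(trace(P₀ * σ₀)) + p₁·Re(trace(P₁ * σ₁)) ≥ p₀·Re(trace(Q₀ * σ₀)) + p₁·Re(trace(Q₁ * σ₁)). (Proposition 2) -/
open Matrix
open scoped ComplexOrder

lemma trace_re_nonneg_of_psd {A : Matrix (Fin 2) (Fin 2) ℂ} (hA : A.PosSemidef) :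
    0 ≤ A.trace.re := by
  rw [Matrix.trace, Complex.re_sum]
  apply Finset.sum_nonneg
  intro i _
  have := hA.re_dotProduct_nonneg (Pi.single i 1)
  simpa [dotProduct, Matrix.mulVec, Pi.single_apply, Finset.sum_ite_eq] using this

lemma trace_mul_re_nonneg {A B : Matrix (Fin 2) (Fin 2) ℂ}
    (hA : A.PosSemidef) (hB : B.PosSemidef) : 0 ≤ (A * B).trace.re := by
  open scoped MatrixOrder Matrix.Norms.L2Operator in
  obtain ⟨C, rfl⟩ := CStarAlgebra.nonneg_iff_eq_star_mul_self.mp hB.nonneg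
  simp only [Matrix.star_eq_conjTranspose]
  have h : (A * (Cᴴ * C)).trace = (C * A * Cᴴ).trace := by
    rw [← mul_assoc, Matrix.trace_mul_comm, ← mul_assoc]
  rw [h]
  exact trace_re_nonneg_of_psd (hA.mul_mul_conjTranspose_same C)

/-- For any Hermitian Δ there is a projector P maximizing Re tr(XΔ) over 0 ≤ X ≤ 1. -/
lemma exists_projector_max {Δ : Matrix (Fin 2) (Fin 2) ℂ} (hΔ : Δ.IsHermitian) :
    ∃ P : Matrix (Fin 2) (Fin 2) ℂ, P.IsHermitian ∧ P * P = P ∧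
      ∀ Q : Matrix (Fin 2) (Fin 2) ℂ, Q.PosSemidef → (1 - Q).PosSemidef →
        (Q * Δ).trace.re ≤ (P * Δ).trace.re := by
  set U : Matrix (Fin 2) (Fin 2) ℂ := (hΔ.eigenvectorUnitary : Matrix (Fin 2) (Fin 2) ℂ) with hUdef
  have hU' : star U * U = 1 := (Matrix.mem_unitaryGroup_iff').mp hΔ.eigenvectorUnitary.2
  set e : Fin 2 → ℝ := hΔ.eigenvalues with hedef
  set M : (Fin 2 → ℝ) → Matrix (Fin 2) (Fin 2) ℂ :=
    fun f => U * Matrix.diagonal (fun i => (f i : ℂ)) * star U with hMdef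
  have hMcong : ∀ f g : Fin 2 → ℝ, (∀ i, f i = g i) → M f = M g := by
    intro f g h
    have : f = g := funext h
    rw [this]
  have hMmul : ∀ f g, M f * M g = M (fun i => f i * g i) := by
    intro f g
    simp only [hMdef]
    simp only [mul_assoc]
    rw [← mul_assoc (star U) U, hU', one_mul, ← mul_assoc (diagonal _),
      Matrix.diagonal_mul_diagonal]
    simp [Complex.ofReal_mul]
  have hMsub : ∀ f g, M f - M g = M (fun i => f i - g i) := by
    intro f g
    simp only [hMdef, ← Matrix.sub_mul, ← Matrix.mul_sub, ← Matrix.diagonal_sub]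
    simp [Complex.ofReal_sub]
  have hMherm : ∀ f, (M f).IsHermitian := by
    intro f
    simp only [Matrix.IsHermitian, hMdef, Matrix.star_eq_conjTranspose,
      Matrix.conjTranspose_mul, Matrix.conjTranspose_conjTranspose,
      Matrix.diagonal_conjTranspose]
    have hds : (star fun i => ((f i : ℂ))) = fun i => ((f i : ℂ)) := by
      funext i; simp
    rw [hds, mul_assoc]
  have hMpsd : ∀ f, (∀ i, 0 ≤ f i) → (M f).PosSemidef := by
    intro f hf
    have hd : (Matrix.diagonal (fun i => (f i : ℂ))).PosSemidef :=
      Matrix.PosSemidef.diagonal (fun i => by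
        simpa using (by exact_mod_cast hf i : (0:ℂ) ≤ (f i : ℂ)))
    simpa [hMdef, Matrix.star_eq_conjTranspose] using hd.mul_mul_conjTranspose_same U
  have hΔM : Δ = M e := by
    simpa [hMdef, Function.comp_def] using hΔ.spectral_theorem
  refine ⟨M (fun i => if 0 < e i then 1 else 0), hMherm _, ?_, ?_⟩
  · rw [hMmul]
    exact hMcong _ _ (fun i => by by_cases h : 0 < e i <;> simp [h])
  · intro Q hQ hQ'
    have hpos : M (fun i => if 0 < e i then 1 else 0) * Δ = M (fun i => max (e i) 0) := by
      rw [hΔM, hMmul]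
      refine hMcong _ _ (fun i => ?_)
      by_cases h : 0 < e i
      · simp [h, max_eq_left h.le]
      · simp [h, max_eq_right (not_lt.mp h)]
    have hΔsplit : Δ = M (fun i => max (e i) 0) - M (fun i => max (-e i) 0) := by
      rw [hΔM, hMsub]
      refine hMcong _ _ (fun i => ?_)
      rcases le_total (e i) 0 with h | h
      · rw [max_eq_right h, max_eq_left (by linarith)]; ring
      · rw [max_eq_left h, max_eq_right (by linarith)]; ring
    have hPp : (M (fun i => max (e i) 0)).PosSemidef := hMpsd _ (fun i => le_max_right _ _)
    have hPm : (M (fun i => max (-e i) 0)).PosSemidef := hMpsd _ (fun i => le_max_right _ _)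
    rw [hpos]
    have h1 : (Q * M (fun i => max (e i) 0)).trace.re ≤ (M (fun i => max (e i) 0)).trace.re := by
      have hn := trace_mul_re_nonneg hQ' hPp
      have heq : ((1 - Q) * M (fun i => max (e i) 0)).trace =
          (M (fun i => max (e i) 0)).trace - (Q * M (fun i => max (e i) 0)).trace := by
        rw [Matrix.sub_mul, Matrix.one_mul, Matrix.trace_sub]
      rw [heq, Complex.sub_re] at hn
      linarith
    have h2 : 0 ≤ (Q * M (fun i => max (-e i) 0)).trace.re := trace_mul_re_nonneg hQ hPm
    calc (Q * Δ).trace.re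
        = (Q * M (fun i => max (e i) 0)).trace.re - (Q * M (fun i => max (-e i) 0)).trace.re := by
          rw [hΔsplit, Matrix.mul_sub, Matrix.trace_sub, Complex.sub_re]
      _ ≤ (M (fun i => max (e i) 0)).trace.re := by linarith

/-- **Proposition 2.** For any pair of output states, any prior, and any binary POVM,
there is a binary projective measurement whose probability of correct decision is at
least as large. -/
theorem exists_projective_better_correct_decision
    (σ₀ σ₁ Q₀ Q₁ : Matrix (Fin 2) (Fin 2) ℂ)
    (hσ₀ : σ₀.PosSemidef) (hσ₀t : σ₀.trace = 1)
    (hσ₁ : σ₁.PosSemidef) (hσ₁t : σ₁.trace = 1)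
    (p₀ p₁ : ℝ) (hp₀ : 0 ≤ p₀) (hp₁ : 0 ≤ p₁) (hp : p₀ + p₁ = 1)
    (hQ₀ : Q₀.PosSemidef) (hQ₁ : Q₁.PosSemidef) (hQ : Q₀ + Q₁ = 1) :
    ∃ P₀ P₁ : Matrix (Fin 2) (Fin 2) ℂ, IsProjMeas P₀ P₁ ∧
      p₀ * (Q₀ * σ₀).trace.re + p₁ * (Q₁ * σ₁).trace.re ≤
      p₀ * (P₀ * σ₀).trace.re + p₁ * (P₁ * σ₁).trace.re := by
  have hQ₁' : Q₁ = 1 - Q₀ := by rw [← hQ]; abel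
  set Δ : Matrix (Fin 2) (Fin 2) ℂ := (p₀:ℂ) • σ₀ - (p₁:ℂ) • σ₁ with hΔdef
  have hΔh : Δ.IsHermitian := by
    have h0 : ((p₀:ℂ) • σ₀).IsHermitian := by
      simp [Matrix.IsHermitian, Matrix.conjTranspose_smul, hσ₀.isHermitian.eq]
    have h1 : ((p₁:ℂ) • σ₁).IsHermitian := by
      simp [Matrix.IsHermitian, Matrix.conjTranspose_smul, hσ₁.isHermitian.eq]
    exact h0.sub h1
  obtain ⟨P, hPh, hPP, hopt⟩ := exists_projector_max hΔh
  have key : ∀ X : Matrix (Fin 2) (Fin 2) ℂ,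
      p₀ * (X * σ₀).trace.re + p₁ * ((1 - X) * σ₁).trace.re = p₁ + (X * Δ).trace.re := by
    intro X
    have h1 : (X * Δ).trace = (p₀:ℂ) * (X * σ₀).trace - (p₁:ℂ) * (X * σ₁).trace := by
      rw [hΔdef, Matrix.mul_sub, Matrix.trace_sub, Matrix.mul_smul, Matrix.mul_smul,
        Matrix.trace_smul, Matrix.trace_smul, smul_eq_mul, smul_eq_mul]
    have h2 : ((1 - X) * σ₁).trace = 1 - (X * σ₁).trace := by
      rw [Matrix.sub_mul, Matrix.one_mul, Matrix.trace_sub, hσ₁t]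
    rw [h1, h2]
    simp [Complex.sub_re, Complex.mul_re, Complex.one_re, Complex.one_im]
    ring
  refine ⟨P, 1 - P, ⟨hPh, Matrix.isHermitian_one.sub hPh, hPP, ?_, by abel⟩, ?_⟩
  · rw [Matrix.sub_mul, Matrix.mul_sub, Matrix.mul_sub, Matrix.one_mul, Matrix.one_mul,
      Matrix.mul_one, hPP]
    abel
  · rw [hQ₁', key Q₀, key P]
    have := hopt Q₀ hQ₀ (hQ₁' ▸ hQ₁)
    linarith
end

section
/- If 0 ≤ p00' ≤ p00 ≤ 1, 0 ≤ p11' ≤ p11 ≤ 1 and p00' + p11' ≥ 1, then there exist a, b ∈ [0,1] such that p00' = a·p00 + b·(1-p00) and p11' = (1-a)·(1-p11) + (1-b)·p11; i.e., a binary channel that is dominated in the product ordering by another channel, and satisfies p00' + p11' ≥ 1, is also stochastically degraded with respect to it. (Claim iv of Section III) -/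
/-- **Claim iv of Section III.** A binary channel that is dominated in the product
ordering by another channel and satisfies `p00' + p11' ≥ 1` is also stochastically
degraded with respect to it. -/
theorem dominated_implies_degraded
    (p00 p11 p00' p11' : ℝ)
    (h00 : 0 ≤ p00') (h00' : p00' ≤ p00) (h00'' : p00 ≤ 1)
    (h11 : 0 ≤ p11') (h11' : p11' ≤ p11) (h11'' : p11 ≤ 1)
    (hsum : 1 ≤ p00' + p11') :
    ∃ a b : ℝ, a ∈ Set.Icc (0:ℝ) 1 ∧ b ∈ Set.Icc (0:ℝ) 1 ∧
      p00' = a * p00 + b * (1 - p00) ∧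
      p11' = (1 - a) * (1 - p11) + (1 - b) * p11 := by
  set D : ℝ := p00 + p11 - 1 with hD
  have hD0 : 0 ≤ D := by simp only [hD]; linarith
  rcases eq_or_lt_of_le hD0 with hDeq | hDpos
  · -- degenerate case: p00 + p11 = 1, forcing p00' = p00, p11' = p11
    have h1 : p00' = p00 := by linarith
    have h2 : p11' = p11 := by linarith
    exact ⟨1, 0, ⟨by norm_num, by norm_num⟩, ⟨by norm_num, by norm_num⟩,
      by rw [h1]; ring, by rw [h2]; ring⟩
  · refine ⟨(p00' * p11 - (1 - p00) * (1 - p11')) / D,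
      (p00 * (1 - p11') - p00' * (1 - p11)) / D, ⟨?_, ?_⟩, ⟨?_, ?_⟩, ?_, ?_⟩
    · apply div_nonneg _ hD0
      nlinarith
    · rw [div_le_one hDpos]
      nlinarith
    · apply div_nonneg _ hD0
      nlinarith
    · rw [div_le_one hDpos]
      nlinarith
    · field_simp
      ring
    · field_simp
      ring
end

section
/- Let A be a real 3×3 matrix, b, π ∈ EuclideanSpace ℝ (Fin 3) with ‖π‖ = 1 and u := Aᵀ.mulVec π ≠ 0. Define τ₁ = A.mulVec(‖u‖⁻¹ • u) + b and τ₀ = (2:ℝ) • b - τ₁ (the antipodal point in the ellipsoid, where the outward normals are parallel to π and -π respectively). Then for all ψ₀, ψ₁ in the closed unit ball, (1 + ⟪π, A.mulVec ψ₁ + b⟫)/2 ≤ (1 + ⟪π, τ₁⟫)/2 and (1 - ⟪π, A.mulVec ψ₀ + b⟫)/2 ≤ (1 - ⟪π, τ₀⟫)/2; i.e., the binary channel associated with (τ₀, τ₁) dominates in the product ordering every binary channel associated with other output-state pairs in the ellipsoid, for the projector pair with coherence vectors (−π, π). (Proposition 3) -/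
open Matrix
open scoped RealInnerProductSpace

/-- View a plain vector in `Fin 3 → ℝ` as an element of Euclidean 3-space. -/
def toE (x : Fin 3 → ℝ) : EuclideanSpace ℝ (Fin 3) := WithLp.toLp 2 x

lemma adjoint_inner (A : Matrix (Fin 3) (Fin 3) ℝ) (π ψ : EuclideanSpace ℝ (Fin 3)) :
    ⟪π, toE (A.mulVec ψ)⟫ = ⟪toE (Aᵀ.mulVec π), ψ⟫ := by
  simp only [toE, PiLp.inner_apply, RCLike.inner_apply, starRingEnd_apply, star_trivial]
  have : π ⬝ᵥ A.mulVec ψ = Aᵀ.mulVec π ⬝ᵥ ψ := by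
    rw [Matrix.dotProduct_mulVec, Matrix.mulVec_transpose]
  simpa [dotProduct, mul_comm] using this

/-- **Proposition 3.** The binary channel associated with the antipodal pair
`(τ₀, τ₁)` of points of the ellipsoid where the outward normals are parallel to `-π`
and `π` dominates, in the product ordering, every binary channel associated with other
output-state pairs in the ellipsoid, for the projector pair with coherence vectors
`(-π, π)`. -/
theorem antipodal_states_dominate
    (A : Matrix (Fin 3) (Fin 3) ℝ) (b π : EuclideanSpace ℝ (Fin 3))
    (hπ : ‖π‖ = 1) (hu : toE (Aᵀ.mulVec π) ≠ 0)
    (τ₁ τ₀ : EuclideanSpace ℝ (Fin 3))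
    (hτ₁ : τ₁ = toE (A.mulVec (‖toE (Aᵀ.mulVec π)‖⁻¹ • toE (Aᵀ.mulVec π))) + b)
    (hτ₀ : τ₀ = (2:ℝ) • b - τ₁) :
    ∀ ψ₀ ψ₁ : EuclideanSpace ℝ (Fin 3), ‖ψ₀‖ ≤ 1 → ‖ψ₁‖ ≤ 1 →
      (1 + ⟪π, toE (A.mulVec ψ₁) + b⟫) / 2 ≤ (1 + ⟪π, τ₁⟫) / 2 ∧
      (1 - ⟪π, toE (A.mulVec ψ₀) + b⟫) / 2 ≤ (1 - ⟪π, τ₀⟫) / 2 := by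
  intro ψ₀ ψ₁ h0 h1
  set u : EuclideanSpace ℝ (Fin 3) := toE (Aᵀ.mulVec π) with hudef
  have hun : ‖u‖ ≠ 0 := norm_ne_zero_iff.mpr hu
  -- ⟪π, τ₁⟫ = ‖u‖ + ⟪π, b⟫
  have hτ1inner : ⟪π, τ₁⟫ = ‖u‖ + ⟪π, b⟫ := by
    rw [hτ₁, inner_add_right, adjoint_inner]
    rw [← hudef, WithLp.toLp_smul, WithLp.toLp_ofLp, real_inner_smul_right, real_inner_self_eq_norm_sq]
    field_simp
  have key1 : ⟪π, toE (A.mulVec ψ₁)⟫ ≤ ‖u‖ := by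
    rw [adjoint_inner]
    calc ⟪u, ψ₁⟫ ≤ ‖u‖ * ‖ψ₁‖ := real_inner_le_norm u ψ₁
    _ ≤ ‖u‖ * 1 := by
        exact mul_le_mul_of_nonneg_left h1 (norm_nonneg u)
    _ = ‖u‖ := mul_one _
  have key0 : -‖u‖ ≤ ⟪π, toE (A.mulVec ψ₀)⟫ := by
    rw [adjoint_inner]
    have := abs_real_inner_le_norm u ψ₀
    have h2 : |⟪u, ψ₀⟫| ≤ ‖u‖ := by
      calc |⟪u, ψ₀⟫| ≤ ‖u‖ * ‖ψ₀‖ := this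
      _ ≤ ‖u‖ * 1 := mul_le_mul_of_nonneg_left h0 (norm_nonneg u)
      _ = ‖u‖ := mul_one _
    linarith [neg_abs_le ⟪u, ψ₀⟫]
  constructor
  · rw [inner_add_right, hτ1inner]
    linarith
  · rw [inner_add_right, hτ₀, inner_sub_right, real_inner_smul_right, hτ1inner]
    linarith
end

section
/- Closed-form optimal prior for the binary channel: let 0 < p00 < 1 and 0 < p11 < 1 with p00 + p11 > 1. Define c = (H(p11) - H(p00))/(1 - p11 - p00), r* = 1/(Real.exp c + 1), and p* = (r* - p00)/(1 - p11 - p00). Then p* ∈ Set.Icc (0:ℝ) 1 and for every p ∈ Set.Icc (0:ℝ) 1, I(p; p11, p00) ≤ I(p*; p11, p00); i.e., the prior p* maximizes the mutual information, and I(p*; p11, p00) is the classical binary capacity of the channel (p11, p00). (Equation (p1opt)) -/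
open Real

lemma gibbs_aux {y b : ℝ} (hy : 0 ≤ y) (hb : 0 < b) :
    y * (-Real.log y) ≤ -y * Real.log b + (b - y) := by
  rcases eq_or_lt_of_le hy with h | h
  · simp [← h]; positivity
  · have h1 : Real.log (b / y) ≤ b / y - 1 := Real.log_le_sub_one_of_pos (by positivity)
    have h2 : Real.log (b / y) = Real.log b - Real.log y := Real.log_div hb.ne' h.ne'
    have h3 : y * Real.log (b / y) ≤ y * (b / y - 1) := by
      exact mul_le_mul_of_nonneg_left h1 hy
    have h4 : y * (b / y - 1) = b - y := by field_simp
    nlinarith [h3, h2, h4]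

lemma gibbs {x a : ℝ} (hx0 : 0 ≤ x) (hx1 : x ≤ 1) (ha0 : 0 < a) (ha1 : a < 1) :
    Real.binEntropy x ≤ -x * Real.log a - (1 - x) * Real.log (1 - a) := by
  rw [Real.binEntropy, Real.log_inv, Real.log_inv]
  have k1 := gibbs_aux hx0 ha0
  have k2 := gibbs_aux (y := 1 - x) (b := 1 - a) (by linarith) (by linarith)
  linarith

lemma binEntropy_tangent {x a : ℝ} (hx0 : 0 ≤ x) (hx1 : x ≤ 1) (ha0 : 0 < a) (ha1 : a < 1) :
    Real.binEntropy x ≤ Real.binEntropy a + Real.log ((1 - a) / a) * (x - a) := by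
  have h := gibbs hx0 hx1 ha0 ha1
  have he : Real.binEntropy a + Real.log ((1 - a) / a) * (x - a)
      = -x * Real.log a - (1 - x) * Real.log (1 - a) := by
    rw [Real.binEntropy, Real.log_inv, Real.log_inv,
      Real.log_div (by linarith) ha0.ne']
    ring
  linarith


noncomputable def mutInfo (p p11 p00 : ℝ) : ℝ :=
  Real.binEntropy (p00 * (1 - p) + (1 - p11) * p)
    - (1 - p) * Real.binEntropy p00 - p * Real.binEntropy p11

/-- **Equation (p1opt): closed-form optimal prior for the binary channel.** The prior
`p* = (r* - p00)/(1 - p11 - p00)` with `r* = 1/(exp c + 1)`,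
`c = (H(p11) - H(p00))/(1 - p11 - p00)`, maximizes the mutual information over priors
in `[0,1]`; its value is the classical binary capacity of the channel `(p11, p00)`. -/
theorem optimal_prior_maximizes_mutInfo
    (p00 p11 : ℝ) (h00 : 0 < p00) (h00' : p00 < 1) (h11 : 0 < p11) (h11' : p11 < 1)
    (hsum : 1 < p00 + p11)
    (c rs ps : ℝ)
    (hc : c = (Real.binEntropy p11 - Real.binEntropy p00) / (1 - p11 - p00))
    (hr : rs = 1 / (Real.exp c + 1))
    (hps : ps = (rs - p00) / (1 - p11 - p00)) :
    ps ∈ Set.Icc (0:ℝ) 1 ∧ ∀ p ∈ Set.Icc (0:ℝ) 1, mutInfo p p11 p00 ≤ mutInfo ps p11 p00 := by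
  set d : ℝ := 1 - p11 - p00 with hd
  have hdneg : d < 0 := by rw [hd]; linarith
  have hE := Real.exp_pos c
  have hrs0 : 0 < rs := by rw [hr]; positivity
  have hrs1 : rs < 1 := by
    rw [hr, div_lt_one (by linarith)]; linarith
  have hcd : c * d = Real.binEntropy p11 - Real.binEntropy p00 := by
    rw [hc, div_mul_cancel₀ _ hdneg.ne]
  have hclog : Real.log ((1 - rs) / rs) = c := by
    have h1 : (1 - rs) / rs = Real.exp c := by rw [hr]; field_simp; ring
    rw [h1, Real.log_exp]
  -- bound c from above
  have ht1 := binEntropy_tangent (x := 1 - p00) (a := p11) (by linarith) (by linarith) h11 h11'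
  rw [Real.binEntropy_one_sub] at ht1
  have e1 : (1 - p00 - p11 : ℝ) = d := by rw [hd]; ring
  rw [e1] at ht1
  have hcu : c ≤ -Real.log ((1 - p11) / p11) := by
    rw [hc, div_le_iff_of_neg hdneg]
    linarith
  -- bound c from below
  have ht2 := binEntropy_tangent (x := 1 - p11) (a := p00) (by linarith) (by linarith) h00 h00'
  rw [Real.binEntropy_one_sub, ← hd] at ht2
  have hcl : Real.log ((1 - p00) / p00) ≤ c := by
    rw [hc, le_div_iff_of_neg hdneg]
    linarith
  -- bounds on rs
  have hrs_ge : 1 - p11 ≤ rs := by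
    have h1 : Real.exp c ≤ p11 / (1 - p11) := by
      have h2 : -Real.log ((1 - p11) / p11) = Real.log (p11 / (1 - p11)) := by
        rw [Real.log_div h11.ne' (by linarith), Real.log_div (by linarith) h11.ne']; ring
      calc Real.exp c ≤ Real.exp (Real.log (p11 / (1 - p11))) :=
            Real.exp_le_exp.2 (h2 ▸ hcu)
        _ = p11 / (1 - p11) := Real.exp_log (div_pos h11 (by linarith))
    have h2 : Real.exp c * (1 - p11) ≤ p11 := by
      rw [← le_div_iff₀ (by linarith)]; exact h1
    rw [hr, le_div_iff₀ (by linarith)]; nlinarith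
  have hrs_le : rs ≤ p00 := by
    have h1 : (1 - p00) / p00 ≤ Real.exp c := by
      calc (1 - p00) / p00 = Real.exp (Real.log ((1 - p00) / p00)) :=
            (Real.exp_log (div_pos (by linarith) h00)).symm
        _ ≤ Real.exp c := Real.exp_le_exp.2 hcl
    have h2 : 1 - p00 ≤ Real.exp c * p00 := by
      rw [div_le_iff₀ h00] at h1; linarith
    rw [hr, div_le_iff₀ (by linarith)]; nlinarith
  have hps0 : 0 ≤ ps := by
    rw [hps]
    exact div_nonneg_iff.mpr (Or.inr ⟨by linarith, hdneg.le⟩)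
  have hps1 : ps ≤ 1 := by
    rw [hps, div_le_one_iff]
    right; right; exact ⟨hdneg, by linarith⟩
  refine ⟨⟨hps0, hps1⟩, ?_⟩
  intro p hp
  obtain ⟨hp0, hp1⟩ := hp
  have hdps : d * ps = rs - p00 := by rw [hps, mul_div_cancel₀ _ hdneg.ne]
  have hrs_eq : rs = p00 + d * ps := by linarith
  have hrarg : p00 * (1 - ps) + (1 - p11) * ps = rs := by
    have h3 : p00 * (1 - ps) + (1 - p11) * ps = p00 + d * ps := by rw [hd]; ring
    rw [h3, ← hrs_eq]
  set r : ℝ := p00 * (1 - p) + (1 - p11) * p with hrdef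
  have hr' : r = p00 + d * p := by rw [hrdef, hd]; ring
  have hr0 : 0 ≤ r := by rw [hr']; nlinarith
  have hr1 : r ≤ 1 := by rw [hr']; nlinarith
  have key := binEntropy_tangent (x := r) (a := rs) hr0 hr1 hrs0 hrs1
  rw [hclog] at key
  have hrr : r - rs = d * (p - ps) := by rw [hr', hrs_eq]; ring
  have hce : c * (r - rs) = (p - ps) * (Real.binEntropy p11 - Real.binEntropy p00) := by
    rw [hrr, ← hcd]; ring
  simp only [mutInfo]
  rw [hrarg, ← hrdef]
  linarith [key, hce]
end

section
/- Concavity of mutual information in the prior: for every fixed p00, p11 ∈ [0,1], the function p ↦ I(p; p11, p00) is concave on the interval [0,1] (ConcaveOn ℝ (Set.Icc 0 1)). This justifies that the inner maximization of the binary capacity over the prior is a concave optimization problem with the stationary point as its maximizer. -/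
/-- **Concavity of mutual information in the prior.** For fixed transition
probabilities, the binary mutual information is a concave function of the prior
on `[0,1]`. -/
theorem concaveOn_mutInfo
    (p00 p11 : ℝ) (h00 : p00 ∈ Set.Icc (0:ℝ) 1) (h11 : p11 ∈ Set.Icc (0:ℝ) 1) :
    ConcaveOn ℝ (Set.Icc (0:ℝ) 1) (fun p => mutInfo p p11 p00) := by
  have hE : ConcaveOn ℝ (Set.Icc (0:ℝ) 1) Real.binEntropy :=
    Real.strictConcave_binEntropy.concaveOn
  set q : ℝ → ℝ := fun t => p00 * (1 - t) + (1 - p11) * t with hq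
  have hqmem : ∀ t ∈ Set.Icc (0:ℝ) 1, q t ∈ Set.Icc (0:ℝ) 1 := by
    intro t ht
    obtain ⟨ht0, ht1⟩ := ht
    obtain ⟨h00a, h00b⟩ := h00
    obtain ⟨h11a, h11b⟩ := h11
    constructor
    · have h1 : (0:ℝ) ≤ p00 * (1 - t) := mul_nonneg h00a (by linarith)
      have h2 : (0:ℝ) ≤ (1 - p11) * t := mul_nonneg (by linarith) ht0
      simpa [hq] using add_nonneg h1 h2
    · have h1 : p00 * (1 - t) ≤ 1 * (1 - t) := by
        apply mul_le_mul_of_nonneg_right h00b; linarith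
      have h2 : (1 - p11) * t ≤ 1 * t := by
        apply mul_le_mul_of_nonneg_right (by linarith) ht0
      simp only [hq]; nlinarith
  refine ⟨convex_Icc 0 1, ?_⟩
  intro x hx y hy a b ha hb hab
  have hb' : b = 1 - a := by linarith
  subst hb'
  have hmap : q (a * x + (1 - a) * y) = a * q x + (1 - a) * q y := by
    simp only [hq]; ring
  have hkey := hE.2 (hqmem x hx) (hqmem y hy) ha hb hab
  simp only [smul_eq_mul] at hkey ⊢
  simp only [mutInfo, hq] at *
  rw [show p00 * (1 - (a * x + (1 - a) * y)) + (1 - p11) * (a * x + (1 - a) * y)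
      = a * (p00 * (1 - x) + (1 - p11) * x) + (1 - a) * (p00 * (1 - y) + (1 - p11) * y)
      from hmap]
  set A := Real.binEntropy p00
  set B := Real.binEntropy p11
  have hid : a * ((1 - x) * A + x * B) + (1 - a) * ((1 - y) * A + y * B)
      = (1 - (a * x + (1 - a) * y)) * A + (a * x + (1 - a) * y) * B := by ring
  linarith [hkey, hid]
end
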